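/- Let Ω ⊆ ℂⁿ be open, p ∈ ∂Ω, K ⊆ Ω compact, and r > 0 with B(p,r) ∩ K = ∅. Then for every z ∈ Ω ∩ B(p, r/√n), there exists λ ∈ ℂⁿ with |λᵢ| = 1 for all i such that |f_{λ,p}(z)| > sup_{x ∈ K} |f_{λ,p}(x)|, where f_{λ,p}(x) = (Σᵢ λᵢ·conj(xᵢ - pᵢ))/‖x - p‖². -/

import Mathlib

open scoped BigOperators ComplexConjugate

/-- `f_{λ,p}(z) = (∑ i, λ i * conj (z i - p i)) / ‖z - p‖²` (junk value at `z = p`). -/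
noncomputable def fLamP {n : ℕ} (lam : Fin n → ℂ) (p z : EuclideanSpace ℂ (Fin n)) : ℂ :=
  (∑ i, lam i * conj (z i - p i)) / ((‖z - p‖ ^ 2 : ℝ) : ℂ)

/-!
With `λᵢ = exp (i · arg (zᵢ - pᵢ))` every term `λᵢ · conj (zᵢ - pᵢ)` equals `|zᵢ - pᵢ|`, so the
numerator of `f_{λ,p}(z)` is the `ℓ¹`-norm of `z - p` and `|f_{λ,p}(z)| ≥ 1 / ‖z - p‖ > √n / r`.
For any unimodular `λ`, Cauchy–Schwarz bounds the numerator at `x` by `√n ‖x - p‖`, so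
`|f_{λ,p}(x)| ≤ √n / ‖x - p‖ ≤ √n / r` on `K`, which lies outside `B(p, r)`.
-/

namespace EuclideanSpace

variable {𝕜 ι : Type*} [RCLike 𝕜] [Fintype ι]

theorem norm_le_sum_norm (v : EuclideanSpace 𝕜 ι) : ‖v‖ ≤ ∑ i, ‖v i‖ := by
  rw [EuclideanSpace.norm_eq]
  calc √(∑ i, ‖v i‖ ^ 2) ≤ √((∑ i, ‖v i‖) ^ 2) :=
        Real.sqrt_le_sqrt (Finset.sum_sq_le_sq_sum_of_nonneg fun _ _ ↦ norm_nonneg _)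
    _ = ∑ i, ‖v i‖ := Real.sqrt_sq (by positivity)

theorem sum_norm_le_sqrt_card_mul_norm (v : EuclideanSpace 𝕜 ι) :
    ∑ i, ‖v i‖ ≤ √(Fintype.card ι) * ‖v‖ := by
  rw [EuclideanSpace.norm_eq, ← Real.sqrt_mul (Nat.cast_nonneg _)]
  refine Real.le_sqrt_of_sq_le ?_
  simpa using sq_sum_le_card_mul_sum_sq (s := Finset.univ) (f := fun i ↦ ‖v i‖)

end EuclideanSpace

open Complex

theorem exp_arg_mul_I_mul_conj (w : ℂ) : exp (arg w * I) * conj w = ‖w‖ := by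
  conv_lhs => rw [← norm_mul_exp_arg_mul_I w]
  rw [map_mul, conj_ofReal, ← exp_conj, map_mul, conj_ofReal, conj_I, mul_left_comm,
    ← exp_add]
  simp

section

variable {n : ℕ}

theorem norm_fLamP_le {lam : Fin n → ℂ} (hlam : ∀ i, ‖lam i‖ ≤ 1)
    (p x : EuclideanSpace ℂ (Fin n)) :
    ‖fLamP lam p x‖ ≤ √n / ‖x - p‖ := by
  have hnum : ‖∑ i, lam i * conj (x i - p i)‖ ≤ √n * ‖x - p‖ :=
    calc ‖∑ i, lam i * conj (x i - p i)‖ ≤ ∑ i, ‖(x - p) i‖ := by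
          refine (norm_sum_le _ _).trans (Finset.sum_le_sum fun i _ ↦ ?_)
          rw [norm_mul, RCLike.norm_conj]
          exact mul_le_of_le_one_left (norm_nonneg _) (hlam i)
      _ ≤ √n * ‖x - p‖ := by
          simpa using EuclideanSpace.sum_norm_le_sqrt_card_mul_norm (x - p)
  rw [fLamP, norm_div, norm_real, Real.norm_of_nonneg (by positivity)]
  rcases (norm_nonneg (x - p)).eq_or_lt with h | h
  · simp [← h]
  · rw [div_le_div_iff₀ (by positivity) h, sq, ← mul_assoc]
    exact mul_le_mul_of_nonneg_right hnum h.le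

noncomputable def alignedPhases (p z : EuclideanSpace ℂ (Fin n)) : Fin n → ℂ :=
  fun i ↦ exp (arg (z i - p i) * I)

theorem norm_alignedPhases (p z : EuclideanSpace ℂ (Fin n)) (i : Fin n) :
    ‖alignedPhases p z i‖ = 1 :=
  norm_exp_ofReal_mul_I _

theorem inv_norm_sub_le_norm_fLamP_alignedPhases (p z : EuclideanSpace ℂ (Fin n)) :
    ‖z - p‖⁻¹ ≤ ‖fLamP (alignedPhases p z) p z‖ := by
  have hnum : ∑ i, alignedPhases p z i * conj (z i - p i) = ((∑ i, ‖(z - p) i‖ : ℝ) : ℂ) := by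
    push_cast
    exact Finset.sum_congr rfl fun i _ ↦ exp_arg_mul_I_mul_conj _
  rw [fLamP, hnum, norm_div, norm_real, norm_real, Real.norm_of_nonneg (by positivity),
    Real.norm_of_nonneg (by positivity)]
  rcases (norm_nonneg (z - p)).eq_or_lt with h | h
  · simp [← h]
  · rw [inv_eq_one_div, div_le_div_iff₀ h (by positivity), one_mul, sq]
    exact mul_le_mul_of_nonneg_right (EuclideanSpace.norm_le_sum_norm _) h.le

end

theorem exists_separating_fLamP_general {n : ℕ}
    (Ω : Set (EuclideanSpace ℂ (Fin n))) (hΩ : IsOpen Ω)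
    (p : EuclideanSpace ℂ (Fin n)) (hp : p ∈ frontier Ω)
    (K : Set (EuclideanSpace ℂ (Fin n)))
    (r : ℝ) (hrK : Metric.ball p r ∩ K = ∅) :
    ∀ z ∈ Ω ∩ Metric.ball p (r / Real.sqrt n),
      ∃ lam : Fin n → ℂ, (∀ i, ‖lam i‖ = 1) ∧
        (⨆ x ∈ K, ‖fLamP lam p x‖) < ‖fLamP lam p z‖ := by
  rintro z ⟨hzΩ, hz⟩
  have hpΩ : p ∉ Ω := (hΩ.frontier_eq ▸ hp).2
  have hzp : 0 < ‖z - p‖ := norm_pos_iff.2 <| sub_ne_zero.2 fun h ↦ hpΩ (h ▸ hzΩ)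
  rw [Metric.mem_ball, dist_eq_norm] at hz
  obtain ⟨hr, hn⟩ : 0 < r ∧ 0 < √n :=
    (div_pos_iff.1 (hzp.trans hz)).resolve_right fun h ↦ (Real.sqrt_nonneg _).not_gt h.2
  refine ⟨alignedPhases p z, norm_alignedPhases p z, ?_⟩
  have hKbound : ∀ x ∈ K, ‖fLamP (alignedPhases p z) p x‖ ≤ √n / r := fun x hx ↦ by
    have hxr : r ≤ ‖x - p‖ := by
      by_contra! h
      exact hrK.subset ⟨by rwa [Metric.mem_ball, dist_eq_norm], hx⟩
    exact (norm_fLamP_le (fun i ↦ (norm_alignedPhases p z i).le) p x).trans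
      (div_le_div_of_nonneg_left hn.le hr hxr)
  calc (⨆ x ∈ K, ‖fLamP (alignedPhases p z) p x‖) ≤ √n / r :=
        Real.iSup_le (fun x ↦ Real.iSup_le (hKbound x) (by positivity)) (by positivity)
    _ < ‖z - p‖⁻¹ := by
        rwa [lt_inv_comm₀ (by positivity) hzp, inv_div]
    _ ≤ ‖fLamP (alignedPhases p z) p z‖ := inv_norm_sub_le_norm_fLamP_alignedPhases p z

/-- If `B(p,r) ∩ K = ∅` with `p ∈ ∂Ω`, then every `z ∈ Ω ∩ B(p, r/√n)` is separated from `K`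
by some `f_{λ,p}` with unimodular `λ`. -/
theorem exists_separating_fLamP {n : ℕ}
    (Ω : Set (EuclideanSpace ℂ (Fin n))) (hΩ : IsOpen Ω)
    (p : EuclideanSpace ℂ (Fin n)) (hp : p ∈ frontier Ω)
    (K : Set (EuclideanSpace ℂ (Fin n))) (hK : IsCompact K) (hKΩ : K ⊆ Ω)
    (r : ℝ) (hr : 0 < r) (hrK : Metric.ball p r ∩ K = ∅) :
    ∀ z ∈ Ω ∩ Metric.ball p (r / Real.sqrt n),
      ∃ lam : Fin n → ℂ, (∀ i, ‖lam i‖ = 1) ∧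
        (⨆ x ∈ K, ‖fLamP lam p x‖) < ‖fLamP lam p z‖ :=
  exists_separating_fLamP_general Ω hΩ p hp K r hrK
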